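/- Let N ≥ 3 be an odd integer and u = (u_0, …, u_N) ∈ [0,1]^{N+1}. If max(R_N(u), 0) ≤ Q_{0,N}(u), then max(R_N(u), 0) ≤ Q_N(u); that is, max(R_N(u), 0) ≤ min((u_j+u_k)/2, 1 − (u_j+u_k)/2) for every pair (j,k) with 0 ≤ j,k ≤ N and j+k odd. -/

import Mathlib

/-!
If `R := R_N(u) ≤ 0` the claim only needs `u_j + u_k ≤ 2`. If `R > 0`, write `N = 2m + 1`; then
`m ≥ 1` and `2m R = ∑ u - 1`. For `j` even and `k` odd, the `m` remaining even indices and the `m`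
remaining odd indices can be matched into `m` pairs with odd index sum, each of `u`-sum at least
`2R`, so `∑ u - u_j - u_k ≥ 2m R = ∑ u - 1`, i.e. `u_j + u_k ≤ 1`. Hence
`R ≤ (u_j + u_k)/2 ≤ 1/2 ≤ 1 - (u_j + u_k)/2`.
-/

open Finset

theorem Nat.card_filter_odd_range (n : ℕ) : #{i ∈ range (2 * n) | Odd i} = n := by
  simpa [← even_iff_two_dvd, Nat.even_add_one] using Nat.card_multiples (2 * n) 2

theorem Nat.card_filter_even_range (n : ℕ) : #{i ∈ range (2 * n) | Even i} = n := by
  have := card_filter_add_card_filter_not (s := range (2 * n)) (p := fun i => Even i)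
  simp only [Nat.not_even_iff_odd, Nat.card_filter_odd_range, card_range] at this
  omega

section Pairing

variable {ι M : Type*} [AddCommMonoid M] [PartialOrder M] [IsOrderedAddMonoid M]

theorem Finset.card_nsmul_le_sum_add_sum {A B : Finset ι} (f : ι → M) (c : M) (hAB : #A = #B)
    (h : ∀ a ∈ A, ∀ b ∈ B, c ≤ f a + f b) : #A • c ≤ ∑ a ∈ A, f a + ∑ b ∈ B, f b := by
  let e := Finset.equivOfCardEq hAB
  have hB : ∑ b ∈ B, f b = ∑ a : A, f (e a) := by
    rw [← Finset.sum_coe_sort B, Equiv.sum_comp e (fun b => f b)]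
  rw [hB, ← Finset.sum_coe_sort A, ← Finset.sum_add_distrib, ← Fintype.card_coe A,
    ← Finset.card_univ]
  exact Finset.card_nsmul_le_sum _ _ _ fun a _ => h a a.2 (e a) (e a).2

theorem nsmul_add_le_sum_range_of_forall_odd_add (n : ℕ) (u : ℕ → M) (c : M)
    (h : ∀ a b, a ≤ 2 * n + 1 → b ≤ 2 * n + 1 → Odd (a + b) → c ≤ u a + u b)
    {j k : ℕ} (hj : j ≤ 2 * n + 1) (hk : k ≤ 2 * n + 1) (hjk : Odd (j + k)) :
    n • c + (u j + u k) ≤ ∑ i ∈ range (2 * n + 2), u i := by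
  wlog hje : Even j generalizing j k
  · rw [add_comm (u j)]
    refine this hk hj (by rwa [add_comm]) ?_
    exact (Nat.odd_add.mp hjk).mp (Nat.not_even_iff_odd.mp hje)
  have hko : Odd k := by
    rw [← Nat.not_even_iff_odd, ← Nat.odd_add.mp hjk, Nat.not_odd_iff_even]
    exact hje
  set E := {i ∈ range (2 * n + 2) | Even i}
  set O := {i ∈ range (2 * n + 2) | Odd i}
  have hjE : j ∈ E := mem_filter.mpr ⟨mem_range.mpr (by omega), hje⟩
  have hkO : k ∈ O := mem_filter.mpr ⟨mem_range.mpr (by omega), hko⟩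
  have hEj : #(E.erase j) = n := by
    rw [card_erase_of_mem hjE, show #E = n + 1 from Nat.card_filter_even_range (n + 1)]; rfl
  have hOk : #(O.erase k) = n := by
    rw [card_erase_of_mem hkO, show #O = n + 1 from Nat.card_filter_odd_range (n + 1)]; rfl
  have hpair := card_nsmul_le_sum_add_sum u c (hEj.trans hOk.symm) fun a ha b hb => by
    simp only [E, O, mem_erase, mem_filter, mem_range] at ha hb
    exact h a b (by omega) (by omega) (ha.2.2.add_odd hb.2.2)
  rw [hEj] at hpair
  calc n • c + (u j + u k)
      ≤ ∑ a ∈ E.erase j, u a + ∑ b ∈ O.erase k, u b + (u j + u k) := add_le_add_left hpair _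
    _ = ∑ a ∈ E, u a + ∑ b ∈ O, u b := by
      rw [← sum_erase_add E u hjE, ← sum_erase_add O u hkO]; abel
    _ = ∑ i ∈ range (2 * n + 2), u i := by
      simp_rw [E, O, ← Nat.not_even_iff_odd]
      exact sum_filter_add_sum_filter_not _ _ _

end Pairing

theorem stmt_2_general (N : ℕ) (hNodd : Odd N)
    (u : ℕ → ℝ) (hu : ∀ j, j ≤ N → u j ∈ Set.Icc (0 : ℝ) 1)
    (h : ∀ j k, j ≤ N → k ≤ N → Odd (j + k) →
      max (((N : ℝ) - 1)⁻¹ * (∑ i ∈ Finset.range (N + 1), u i - 1)) 0 ≤ (u j + u k) / 2) :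
    ∀ j k, j ≤ N → k ≤ N → Odd (j + k) →
      max (((N : ℝ) - 1)⁻¹ * (∑ i ∈ Finset.range (N + 1), u i - 1)) 0 ≤
        min ((u j + u k) / 2) (1 - (u j + u k) / 2) := by
  intro j k hj hk hjk
  refine le_min (h j k hj hk hjk) ?_
  set R := ((N : ℝ) - 1)⁻¹ * (∑ i ∈ Finset.range (N + 1), u i - 1) with hR
  have hj1 := (hu j hj).2
  have hk1 := (hu k hk).2
  rcases le_or_gt R 0 with hR0 | hR0
  · rw [max_eq_right hR0]
    linarith
  obtain ⟨m, rfl⟩ := hNodd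
  have hm : (((2 * m + 1 : ℕ) : ℝ) - 1) = 2 * m := by push_cast; ring
  have hm0 : (m : ℝ) ≠ 0 := by
    intro hzero
    rw [hR, hm, hzero] at hR0
    simp at hR0
  have hsum : (2 * m) * R = ∑ i ∈ Finset.range (2 * m + 2), u i - 1 := by
    rw [hR, hm]; field_simp
  have hpair := nsmul_add_le_sum_range_of_forall_odd_add m u (2 * R)
    (fun a b ha hb hab => by linarith [(le_max_left R 0).trans (h a b ha hb hab)]) hj hk hjk
  rw [nsmul_eq_mul] at hpair
  have hjk1 : u j + u k ≤ 1 := by linarith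
  have hRjk := h j k hj hk hjk
  rw [max_eq_left hR0.le] at hRjk ⊢
  linarith

/-- Let `N ≥ 3` be odd and `u ∈ [0,1]^{N+1}`. If
`max (R_N(u), 0) ≤ Q_{0,N}(u)`, i.e. `max (R_N(u), 0) ≤ (u_j+u_k)/2` for every
pair with `j+k` odd, then `max (R_N(u), 0) ≤ Q_N(u)`, i.e.
`max (R_N(u), 0) ≤ min ((u_j+u_k)/2, 1 - (u_j+u_k)/2)` for every such pair. -/
theorem stmt_2 (N : ℕ) (hN : 3 ≤ N) (hNodd : Odd N)
    (u : ℕ → ℝ) (hu : ∀ j, j ≤ N → u j ∈ Set.Icc (0 : ℝ) 1)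
    (h : ∀ j k, j ≤ N → k ≤ N → Odd (j + k) →
      max (((N : ℝ) - 1)⁻¹ * (∑ i ∈ Finset.range (N + 1), u i - 1)) 0 ≤ (u j + u k) / 2) :
    ∀ j k, j ≤ N → k ≤ N → Odd (j + k) →
      max (((N : ℝ) - 1)⁻¹ * (∑ i ∈ Finset.range (N + 1), u i - 1)) 0 ≤
        min ((u j + u k) / 2) (1 - (u j + u k) / 2) :=
  stmt_2_general N hNodd u hu h
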